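/- arXiv:2012.10148 — 3 statements merged into one kernel-verified Lean document; each statement's English description precedes it below -/
import Mathlib

section
/- For all vectors a, b in ℝ^d and 1 < p < ∞, if (|a|^{p-2} a - |b|^{p-2} b) · (a - b) = 0 then a = b; that is, the p-Laplace vector field ξ ↦ |ξ|^{p-2}ξ is strictly monotone. -/
/-!
Writing `r = ‖a‖`, `s = ‖b‖`, the pairing `⟪|a|^{p-2} a - |b|^{p-2} b, a - b⟫` splits as
`(r^{p-1} - s^{p-1}) (r - s) + (r^{p-2} + s^{p-2}) (r s - ⟪a, b⟫)`.
Both summands are nonnegative, the first by monotonicity of `x ↦ x^{p-1}` and the second by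
Cauchy–Schwarz. If the pairing vanishes, strict monotonicity of `x ↦ x^{p-1}` forces `r = s`, and
then equality in Cauchy–Schwarz forces `a = b`.
-/

open Real RealInnerProductSpace

namespace Real

lemma rpow_sub_rpow_mul_sub_pos {q r s : ℝ} (hq : 0 < q) (hr : 0 ≤ r) (hs : 0 ≤ s)
    (hrs : r ≠ s) : 0 < (r ^ q - s ^ q) * (r - s) := by
  rcases hrs.lt_or_gt with hlt | hgt
  · exact mul_pos_of_neg_of_neg (sub_neg.2 (rpow_lt_rpow hr hlt hq)) (sub_neg.2 hlt)
  · exact mul_pos (sub_pos.2 (rpow_lt_rpow hs hgt hq)) (sub_pos.2 hgt)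

lemma rpow_sub_rpow_mul_sub_nonneg {q r s : ℝ} (hq : 0 < q) (hr : 0 ≤ r) (hs : 0 ≤ s) :
    0 ≤ (r ^ q - s ^ q) * (r - s) := by
  rcases eq_or_ne r s with rfl | hrs
  · simp
  · exact (rpow_sub_rpow_mul_sub_pos hq hr hs hrs).le

end Real

section PLaplace

variable {F : Type*} [NormedAddCommGroup F] [InnerProductSpace ℝ F]

noncomputable def pLaplaceField (p : ℝ) (x : F) : F := ‖x‖ ^ (p - 2) • x

lemma eq_of_norm_eq_of_inner_eq_norm_mul {a b : F} (hnorm : ‖a‖ = ‖b‖)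
    (hinner : ⟪a, b⟫ = ‖a‖ * ‖b‖) : a = b := by
  have hsq : ‖a - b‖ ^ 2 = 0 := by
    rw [norm_sub_sq_real, hinner, hnorm]
    ring
  exact sub_eq_zero.1 (norm_eq_zero.1 (pow_eq_zero_iff two_ne_zero |>.1 hsq))

lemma inner_pLaplaceField_sub {p : ℝ} (hp : p ≠ 1) (a b : F) :
    ⟪pLaplaceField p a - pLaplaceField p b, a - b⟫ =
      (‖a‖ ^ (p - 1) - ‖b‖ ^ (p - 1)) * (‖a‖ - ‖b‖) +
        (‖a‖ ^ (p - 2) + ‖b‖ ^ (p - 2)) * (‖a‖ * ‖b‖ - ⟪a, b⟫) := by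
  have hp' : p - 2 + 1 ≠ 0 := by contrapose! hp; linarith
  have hsub : p - 1 = p - 2 + 1 := by ring
  have ha : ‖a‖ ^ (p - 2) * ‖a‖ = ‖a‖ ^ (p - 1) := by
    rw [hsub, rpow_add_one' (norm_nonneg a) hp']
  have hb : ‖b‖ ^ (p - 2) * ‖b‖ = ‖b‖ ^ (p - 1) := by
    rw [hsub, rpow_add_one' (norm_nonneg b) hp']
  simp only [pLaplaceField, inner_sub_left, inner_sub_right, real_inner_smul_left,
    real_inner_self_eq_norm_sq, real_inner_comm a b]
  linear_combination (‖a‖ - ‖b‖) * ha + (‖b‖ - ‖a‖) * hb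

theorem eq_of_inner_pLaplaceField_sub_eq_zero {p : ℝ} (hp : 1 < p) {a b : F}
    (h : ⟪pLaplaceField p a - pLaplaceField p b, a - b⟫ = 0) : a = b := by
  rw [inner_pLaplaceField_sub hp.ne'] at h
  have hmono := rpow_sub_rpow_mul_sub_nonneg (sub_pos.2 hp) (norm_nonneg a) (norm_nonneg b)
  have hcs : 0 ≤ (‖a‖ ^ (p - 2) + ‖b‖ ^ (p - 2)) * (‖a‖ * ‖b‖ - ⟪a, b⟫) :=
    mul_nonneg (by positivity) (sub_nonneg.2 (real_inner_le_norm a b))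
  obtain ⟨hmono0, hcs0⟩ := (add_eq_zero_iff_of_nonneg hmono hcs).1 h
  have hnorm : ‖a‖ = ‖b‖ := by
    by_contra hne
    exact (rpow_sub_rpow_mul_sub_pos (sub_pos.2 hp) (norm_nonneg a) (norm_nonneg b) hne).ne'
      hmono0
  rcases eq_or_ne a 0 with rfl | ha
  · exact (norm_eq_zero.1 (hnorm.symm.trans norm_zero)).symm
  have hfactor : 0 < ‖a‖ ^ (p - 2) + ‖b‖ ^ (p - 2) := by
    have := rpow_pos_of_pos (norm_pos_iff.2 ha) (p - 2)
    positivity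
  refine eq_of_norm_eq_of_inner_eq_norm_mul hnorm ?_
  linarith [(mul_eq_zero.1 hcs0).resolve_left hfactor.ne']

end PLaplace

theorem pLaplace_field_strict_monotone_general (d : ℕ) (p : ℝ) (hp : 1 < p)
    (a b : EuclideanSpace ℝ (Fin d))
    (h : (inner ℝ ((‖a‖ ^ (p - 2) : ℝ) • a - (‖b‖ ^ (p - 2) : ℝ) • b) (a - b) : ℝ) = 0) :
    a = b :=
  eq_of_inner_pLaplaceField_sub_eq_zero hp h

/-- Strict monotonicity of the p-Laplace vector field `ξ ↦ |ξ|^{p-2} ξ` on `ℝ^d`: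
if `(|a|^{p-2} a - |b|^{p-2} b) · (a - b) = 0` then `a = b`. -/
theorem pLaplace_field_strict_monotone (d : ℕ) (hd : 0 < d) (p : ℝ) (hp : 1 < p)
    (a b : EuclideanSpace ℝ (Fin d))
    (h : (inner ℝ ((‖a‖ ^ (p - 2) : ℝ) • a - (‖b‖ ^ (p - 2) : ℝ) • b) (a - b) : ℝ) = 0) :
    a = b :=
  pLaplace_field_strict_monotone_general d p hp a b h
end

section
/- Let V be a reflexive separable Banach space and A : V → V' a hemicontinuous, strictly monotone, bounded, coercive operator which is bijective. Then the inverse A⁻¹ : V' → V is demicontinuous: if f_n → f strongly in V' then A⁻¹(f_n) ⇀ A⁻¹(f) weakly in V. -/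
/-!
Coercivity turns the bound on `f n` into a bound on `u n`. A reflexive separable space has a
separable dual (a space with separable dual is separable, applied to `V'`), so by sequential
Banach–Alaoglu in `V'' = V` every subsequence of `u` has a weakly convergent subsequence
`u (n k) ⇀ w`. Pairing the weak limit with the strong limit `f (n k) → g` in the monotonicity
inequality gives `⟨g - A v, w - v⟩ ≥ 0` for all `v`; testing with `v = w + t z`, `t ↓ 0`, and
using hemicontinuity yields `A w = g` (Minty's trick), and strict monotonicity forces `w = u₀`.
-/

open Filter Topology TopologicalSpace NormedSpace

section Dual

variable {𝕜 E : Type*} [RCLike 𝕜] [NormedAddCommGroup E] [NormedSpace 𝕜 E]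

theorem Submodule.exists_dual_ne_zero_of_not_dense (S : Submodule 𝕜 E) (hS : ¬Dense (S : Set E)) :
    ∃ F : StrongDual 𝕜 E, F ≠ 0 ∧ ∀ x ∈ S, F x = 0 := by
  obtain ⟨y, hy⟩ : ∃ y, y ∉ S.topologicalClosure := by
    by_contra! h
    exact hS (S.dense_iff_topologicalClosure_eq_top.mpr (eq_top_iff.mpr fun y _ => h y))
  have := S.isClosed_topologicalClosure
  obtain ⟨f, hf⟩ := SeparatingDual.exists_ne_zero (R := 𝕜)
    (mt (Submodule.Quotient.mk_eq_zero S.topologicalClosure).mp hy)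
  refine ⟨f.comp S.topologicalClosure.mkQL, fun h => hf (by simpa using congr($h y)),
    fun x hx => ?_⟩
  simp [(Submodule.Quotient.mk_eq_zero _).mpr (S.le_topologicalClosure hx)]

theorem separableSpace_of_separableSpace_strongDual [SeparableSpace (StrongDual 𝕜 E)] :
    SeparableSpace E := by
  set d := denseSeq (StrongDual 𝕜 E)
  have hx : ∀ k, ∃ x : E, ‖x‖ ≤ 1 ∧ ‖d k‖ / 2 ≤ ‖d k x‖ := by
    intro k
    rcases (norm_nonneg (d k)).eq_or_lt with h | h
    · exact ⟨0, by simp, by simp [← h]⟩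
    · obtain ⟨x, hx_norm, hx_apply⟩ := (d k).exists_lt_apply_of_lt_opNorm (half_lt_self h)
      exact ⟨x, hx_norm.le, hx_apply.le⟩
  choose x hx_norm hx_apply using hx
  -- `F` below kills every `x k`, yet the `d k` close to `F` are almost normed by the `x k`.
  have hdense : Dense (Submodule.span 𝕜 (Set.range x) : Set E) := by
    by_contra hS
    obtain ⟨F, hF0, hF⟩ := (Submodule.span 𝕜 (Set.range x)).exists_dual_ne_zero_of_not_dense hS
    have hFpos : 0 < ‖F‖ := norm_pos_iff.mpr hF0
    obtain ⟨k, hk⟩ := Metric.denseRange_iff.mp (denseRange_denseSeq _) F (‖F‖ / 4) (by positivity)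
    rw [dist_comm, dist_eq_norm] at hk
    have hFx : F (x k) = 0 := hF _ (Submodule.subset_span ⟨k, rfl⟩)
    have hdk_norm : ‖F‖ - ‖d k‖ ≤ ‖d k - F‖ := by
      simpa [norm_sub_rev] using norm_sub_norm_le F (d k)
    have hdk_small : ‖d k (x k)‖ ≤ ‖d k - F‖ :=
      calc ‖d k (x k)‖ = ‖(d k - F) (x k)‖ := by simp [hFx]
        _ ≤ ‖d k - F‖ * ‖x k‖ := (d k - F).le_opNorm _
        _ ≤ ‖d k - F‖ := mul_le_of_le_one_right (norm_nonneg _) (hx_norm k)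
    linarith [hx_apply k]
  have := ((Set.countable_range x).isSeparable.span (R := 𝕜)).closure
  rw [hdense.closure_eq] at this
  exact isSeparable_univ_iff.mp this

theorem separableSpace_strongDual_of_surjective_inclusionInDoubleDual [SeparableSpace E]
    (hrefl : Function.Surjective (inclusionInDoubleDual 𝕜 E)) : SeparableSpace (StrongDual 𝕜 E) :=
  have : SeparableSpace (StrongDual 𝕜 (StrongDual 𝕜 E)) :=
    hrefl.denseRange.separableSpace (inclusionInDoubleDual 𝕜 E).continuous
  separableSpace_of_separableSpace_strongDual (𝕜 := 𝕜)

theorem exists_weakly_tendsto_subseq_of_reflexive [SeparableSpace (StrongDual 𝕜 E)]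
    (hrefl : Function.Surjective (inclusionInDoubleDual 𝕜 E)) {u : ℕ → E} {C : ℝ}
    (hC : ∀ n, ‖u n‖ ≤ C) :
    ∃ φ : ℕ → ℕ, StrictMono φ ∧ ∃ w : E,
      ∀ ℓ : StrongDual 𝕜 E, Tendsto (fun k => ℓ (u (φ k))) atTop (𝓝 (ℓ w)) := by
  set U : ℕ → WeakDual 𝕜 (StrongDual 𝕜 E) := fun n => inclusionInDoubleDual 𝕜 E (u n)
  have hU : ∀ n, U n ∈ WeakDual.toStrongDual ⁻¹' Metric.closedBall 0 C := fun n =>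
    Set.mem_preimage.mpr <| (mem_closedBall_zero_iff (E := StrongDual 𝕜 (StrongDual 𝕜 E))).mpr <|
      (double_dual_bound 𝕜 E (u n)).trans (hC n)
  obtain ⟨Φ, -, φ, hφ, hUΦ⟩ := WeakDual.isSeqCompact_closedBall 𝕜 _ 0 C hU
  obtain ⟨w, hw⟩ := hrefl (WeakDual.toStrongDual Φ)
  refine ⟨φ, hφ, w, fun ℓ => ?_⟩
  rw [show ℓ w = Φ ℓ from DFunLike.congr_fun hw ℓ]
  exact ((WeakDual.eval_continuous ℓ).tendsto Φ).comp hUΦ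

theorem tendsto_apply_of_tendsto_of_weakly_tendsto {ι : Type*} {l : Filter ι}
    {f : ι → StrongDual 𝕜 E} {g : StrongDual 𝕜 E} {u : ι → E} {w : E} {C : ℝ}
    (hf : Tendsto f l (𝓝 g)) (hu : ∀ ℓ : StrongDual 𝕜 E, Tendsto (fun i => ℓ (u i)) l (𝓝 (ℓ w)))
    (hC : ∀ i, ‖u i‖ ≤ C) : Tendsto (fun i => f i (u i)) l (𝓝 (g w)) := by
  have hsmall : Tendsto (fun i => (f i - g) (u i)) l (𝓝 0) :=
    squeeze_zero_norm (fun i => ((f i - g).le_opNorm _).trans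
      (mul_le_mul_of_nonneg_left (hC i) (norm_nonneg _)))
      (by simpa using (tendsto_sub_nhds_zero_iff.mpr hf).norm.mul_const C)
  simpa using hsmall.add (hu g)

end Dual

section MonotoneOperator

variable {V : Type*} [NormedAddCommGroup V] [NormedSpace ℝ V] {A : V → StrongDual ℝ V}

theorem isBounded_preimage_of_coercive
    (hcoer : ∀ M : ℝ, ∃ R : ℝ, ∀ v : V, R ≤ ‖v‖ → M * ‖v‖ ≤ (A v) v)
    {s : Set (StrongDual ℝ V)} (hs : Bornology.IsBounded s) : Bornology.IsBounded (A ⁻¹' s) := by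
  obtain ⟨K, hK⟩ := isBounded_iff_forall_norm_le.mp hs
  obtain ⟨R, hR⟩ := hcoer (K + 1)
  refine isBounded_iff_forall_norm_le.mpr ⟨max R 0, fun v hv => ?_⟩
  by_contra! hvR
  have hupper : (A v) v ≤ K * ‖v‖ :=
    calc (A v) v ≤ ‖A v‖ * ‖v‖ := (le_abs_self _).trans ((A v).le_opNorm v)
      _ ≤ K * ‖v‖ := by gcongr; exact hK _ hv
  obtain ⟨hRv, hv0⟩ := max_lt_iff.mp hvR
  nlinarith [hR v hRv.le]

theorem zero_le_sub_apply_sub_of_tendsto (hmono : ∀ u v : V, 0 ≤ (A u - A v) (u - v))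
    {ι : Type*} {l : Filter ι} [l.NeBot] {u : ι → V} {w : V} {g : StrongDual ℝ V} {C : ℝ}
    (hAu : Tendsto (fun i => A (u i)) l (𝓝 g))
    (hu : ∀ ℓ : StrongDual ℝ V, Tendsto (fun i => ℓ (u i)) l (𝓝 (ℓ w)))
    (hC : ∀ i, ‖u i‖ ≤ C) (v : V) : 0 ≤ (g - A v) (w - v) := by
  have hlim : Tendsto (fun i => (A (u i) - A v) (u i - v)) l (𝓝 ((g - A v) (w - v))) :=
    tendsto_apply_of_tendsto_of_weakly_tendsto (hAu.sub_const (A v))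
      (fun ℓ => by simpa only [map_sub] using (hu ℓ).sub_const (ℓ v))
      (fun i => (norm_sub_le _ _).trans (add_le_add_left (hC i) _))
  exact ge_of_tendsto' hlim fun i => hmono (u i) v

theorem eq_of_forall_zero_le_sub_apply_sub
    (hhemi : ∀ u v w : V, Continuous fun t : ℝ => (A (u + t • v)) w)
    {w : V} {g : StrongDual ℝ V} (h : ∀ v, 0 ≤ (g - A v) (w - v)) : A w = g := by
  have hle : ∀ z, g z ≤ A w z := by
    intro z
    have hcont : Tendsto (fun t : ℝ => A (w + t • z) z) (𝓝[>] 0) (𝓝 (A w z)) := by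
      simpa using ((hhemi w z z).tendsto 0).mono_left nhdsWithin_le_nhds
    refine ge_of_tendsto hcont (eventually_nhdsWithin_of_forall fun t (ht : 0 < t) => ?_)
    have := h (w + t • z)
    rw [sub_add_cancel_left, map_neg, map_smul, smul_eq_mul, sub_apply] at this
    nlinarith
  ext z
  exact le_antisymm (by simpa using hle (-z)) (hle z)

end MonotoneOperator

theorem inverse_demicontinuous_general {V : Type*} [NormedAddCommGroup V] [NormedSpace ℝ V]
    [TopologicalSpace.SeparableSpace V]
    (hrefl : Function.Surjective ⇑(NormedSpace.inclusionInDoubleDual ℝ V))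
    (A : V → StrongDual ℝ V)
    (hhemi : ∀ u v w : V, Continuous fun t : ℝ => (A (u + t • v)) w)
    (hmono : ∀ u v : V, 0 ≤ (A u - A v) (u - v))
    (hstrict : ∀ u v : V, (A u - A v) (u - v) = 0 → u = v)
    (hcoer : ∀ M : ℝ, ∃ R : ℝ, ∀ v : V, R ≤ ‖v‖ → M * ‖v‖ ≤ (A v) v)
    (f : ℕ → StrongDual ℝ V) (g : StrongDual ℝ V)
    (hconv : Tendsto f atTop (nhds g))
    (u : ℕ → V) (u₀ : V) (hu : ∀ n, A (u n) = f n) (hu₀ : A u₀ = g) :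
    ∀ ℓ : StrongDual ℝ V, Tendsto (fun n => ℓ (u n)) atTop (nhds (ℓ u₀)) := by
  intro ℓ
  have := separableSpace_strongDual_of_surjective_inclusionInDoubleDual hrefl
  obtain ⟨C, hC⟩ : ∃ C, ∀ n, ‖u n‖ ≤ C := by
    have hbdd := isBounded_preimage_of_coercive hcoer (Metric.isBounded_range_of_tendsto f hconv)
    obtain ⟨C, hC⟩ := isBounded_iff_forall_norm_le.mp hbdd
    exact ⟨C, fun n => hC (u n) ⟨n, (hu n).symm⟩⟩
  refine tendsto_of_subseq_tendsto fun ns hns => ?_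
  obtain ⟨φ, hφ, w, hw⟩ := exists_weakly_tendsto_subseq_of_reflexive hrefl fun k => hC (ns k)
  have hAu : Tendsto (fun k => A (u (ns (φ k)))) atTop (𝓝 g) := by
    simpa only [hu, Function.comp_def] using hconv.comp (hns.comp hφ.tendsto_atTop)
  have hAw : A w = g := eq_of_forall_zero_le_sub_apply_sub hhemi
    (zero_le_sub_apply_sub_of_tendsto hmono hAu hw fun k => hC _)
  obtain rfl : w = u₀ := hstrict w u₀ (by simp [hAw, hu₀])
  exact ⟨φ, hw ℓ⟩

/-- Demicontinuity of the inverse of a hemicontinuous, strictly monotone, bounded,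
coercive, bijective operator `A : V → V'` on a reflexive separable Banach space `V`:
if `f n → f` strongly in `V'` then `A⁻¹ (f n) ⇀ A⁻¹ f` weakly in `V`
(formulated via preimages: if `A (u n) = f n`, `A u₀ = f` and `f n → f`, then
`u n ⇀ u₀`). -/
theorem inverse_demicontinuous {V : Type*} [NormedAddCommGroup V] [NormedSpace ℝ V]
    [CompleteSpace V] [TopologicalSpace.SeparableSpace V]
    (hrefl : Function.Surjective ⇑(NormedSpace.inclusionInDoubleDual ℝ V))
    (A : V → StrongDual ℝ V)
    (hhemi : ∀ u v w : V, Continuous fun t : ℝ => (A (u + t • v)) w)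
    (hmono : ∀ u v : V, 0 ≤ (A u - A v) (u - v))
    (hstrict : ∀ u v : V, (A u - A v) (u - v) = 0 → u = v)
    (hbdd : ∀ s : Set V, Bornology.IsBounded s → Bornology.IsBounded (A '' s))
    (hcoer : ∀ M : ℝ, ∃ R : ℝ, ∀ v : V, R ≤ ‖v‖ → M * ‖v‖ ≤ (A v) v)
    (hbij : Function.Bijective A)
    (f : ℕ → StrongDual ℝ V) (g : StrongDual ℝ V)
    (hconv : Tendsto f atTop (nhds g))
    (u : ℕ → V) (u₀ : V) (hu : ∀ n, A (u n) = f n) (hu₀ : A u₀ = g) :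
    ∀ ℓ : StrongDual ℝ V, Tendsto (fun n => ℓ (u n)) atTop (nhds (ℓ u₀)) :=
  inverse_demicontinuous_general hrefl A hhemi hmono hstrict hcoer f g hconv u u₀ hu hu₀
end

section
/- Let V be a reflexive Banach space, A : V → V' monotone and hemicontinuous, (u_n) a sequence in V with u_n ⇀ u weakly in V, A(u_n) → f strongly in V', and limsup_n ⟨A(u_n), u_n⟩ ≤ ⟨f, u⟩. Then A(u) = f (Minty's trick). -/
/-!
A weakly convergent sequence is bounded, so pairing it with a strongly convergent sequence of
functionals converges. Hence monotonicity `0 ≤ ⟨A uₙ - A v, uₙ - v⟩` passes to the limit as the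
variational inequality `0 ≤ ⟨f - A v, u₀ - v⟩` for every `v`. Testing it with `v = u₀ - t • w`,
dividing by `t > 0` and letting `t → 0⁺` by hemicontinuity gives `0 ≤ ⟨f - A u₀, w⟩` for all `w`,
so `A u₀ = f`.
-/

open Filter

section WeakConvergence

variable {𝕜 E : Type*} [RCLike 𝕜] [NormedAddCommGroup E] [NormedSpace 𝕜 E]

/-- Banach–Steinhaus in the dual, which is complete even when `E` is not. -/
theorem exists_norm_le_of_forall_exists_norm_apply_le {ι : Type*} {x : ι → E}
    (h : ∀ ℓ : StrongDual 𝕜 E, ∃ C, ∀ i, ‖ℓ (x i)‖ ≤ C) : ∃ C, ∀ i, ‖x i‖ ≤ C := by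
  obtain ⟨C, hC⟩ := banach_steinhaus (g := fun i => NormedSpace.inclusionInDoubleDual 𝕜 E (x i)) h
  exact ⟨C, fun i => (NormedSpace.inclusionInDoubleDualLi 𝕜 (E := E)).norm_map (x i) ▸ hC i⟩

theorem exists_norm_le_of_tendsto_weakly {x : ℕ → E} {x₀ : E}
    (hx : ∀ ℓ : StrongDual 𝕜 E, Tendsto (fun n => ℓ (x n)) atTop (nhds (ℓ x₀))) :
    ∃ C, ∀ n, ‖x n‖ ≤ C :=
  exists_norm_le_of_forall_exists_norm_apply_le fun ℓ =>
    (hx ℓ).norm.bddAbove_range.imp fun _ hC n => hC (Set.mem_range_self n)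

theorem tendsto_apply_of_tendsto_of_tendsto_weakly {ℓ : ℕ → StrongDual 𝕜 E}
    {ℓ₀ : StrongDual 𝕜 E} {x : ℕ → E} {x₀ : E} (hℓ : Tendsto ℓ atTop (nhds ℓ₀))
    (hx : ∀ ℓ : StrongDual 𝕜 E, Tendsto (fun n => ℓ (x n)) atTop (nhds (ℓ x₀))) :
    Tendsto (fun n => ℓ n (x n)) atTop (nhds (ℓ₀ x₀)) := by
  obtain ⟨C, hC⟩ := exists_norm_le_of_tendsto_weakly hx
  have hdiff : Tendsto (fun n => (ℓ n - ℓ₀) (x n)) atTop (nhds 0) := by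
    refine squeeze_zero_norm (fun n => ((ℓ n - ℓ₀).le_opNorm (x n)).trans
      (mul_le_mul_of_nonneg_left (hC n) (norm_nonneg _))) ?_
    simpa using (tendsto_iff_norm_sub_tendsto_zero.mp hℓ).mul_const C
  simpa using hdiff.add (hx ℓ₀)

end WeakConvergence

theorem ContinuousLinearMap.eq_zero_of_forall_nonneg {E : Type*} [AddCommGroup E] [Module ℝ E]
    [TopologicalSpace E] {ℓ : E →L[ℝ] ℝ} (h : ∀ w, 0 ≤ ℓ w) : ℓ = 0 := by
  ext w
  have h_neg := h (-w)
  rw [map_neg, neg_nonneg] at h_neg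
  exact le_antisymm h_neg (h w)

section Minty

variable {V : Type*} [NormedAddCommGroup V] [NormedSpace ℝ V]

theorem eq_of_forall_nonneg_sub_apply_sub {A : V → StrongDual ℝ V} {u₀ : V}
    {f : StrongDual ℝ V} (hhemi : ∀ v w : V, Continuous fun t : ℝ => A (u₀ + t • v) w)
    (hvi : ∀ v, 0 ≤ (f - A v) (u₀ - v)) : A u₀ = f := by
  refine (sub_eq_zero.mp (ContinuousLinearMap.eq_zero_of_forall_nonneg fun w => ?_)).symm
  have hpos : ∀ t ∈ Set.Ioi (0 : ℝ), 0 ≤ (f - A (u₀ + t • -w)) w := by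
    intro t ht
    have h := hvi (u₀ - t • w)
    rw [sub_sub_cancel, map_smul, smul_eq_mul, mul_nonneg_iff_of_pos_left ht] at h
    rwa [smul_neg, ← sub_eq_add_neg]
  have hlim : Tendsto (fun t : ℝ => (f - A (u₀ + t • -w)) w) (nhdsWithin 0 (Set.Ioi 0))
      (nhds ((f - A u₀) w)) := by
    have hcont : Continuous fun t : ℝ => (f - A (u₀ + t • -w)) w :=
      continuous_const.sub (hhemi (-w) w)
    simpa using (hcont.tendsto 0).mono_left nhdsWithin_le_nhds
  exact ge_of_tendsto hlim (eventually_nhdsWithin_of_forall hpos)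

end Minty

theorem minty_trick_general {V : Type*} [NormedAddCommGroup V] [NormedSpace ℝ V]
    (A : V → StrongDual ℝ V)
    (hmono : ∀ u v : V, 0 ≤ (A u - A v) (u - v))
    (hhemi : ∀ u v w : V, Continuous fun t : ℝ => (A (u + t • v)) w)
    (u : ℕ → V) (u₀ : V)
    (hweak : ∀ ℓ : StrongDual ℝ V,
      Tendsto (fun n => ℓ (u n)) atTop (nhds (ℓ u₀)))
    (f : StrongDual ℝ V)
    (hstrong : Tendsto (fun n => A (u n)) atTop (nhds f)) :
    A u₀ = f := by
  refine eq_of_forall_nonneg_sub_apply_sub (hhemi u₀) fun v => ?_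
  have hweak_sub : ∀ ℓ : StrongDual ℝ V,
      Tendsto (fun n => ℓ (u n - v)) atTop (nhds (ℓ (u₀ - v))) := fun ℓ => by
    simpa only [map_sub] using (hweak ℓ).sub_const (ℓ v)
  exact ge_of_tendsto'
    (tendsto_apply_of_tendsto_of_tendsto_weakly (hstrong.sub_const (A v)) hweak_sub)
    (fun n => hmono (u n) v)

/-- Minty's trick: on a reflexive Banach space `V`, if `A : V → V'` is monotone and
hemicontinuous, `u n ⇀ u₀` weakly in `V`, `A (u n) → f` strongly in `V'`, and
`limsup ⟨A (u n), u n⟩ ≤ ⟨f, u₀⟩`, then `A u₀ = f`. -/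
theorem minty_trick {V : Type*} [NormedAddCommGroup V] [NormedSpace ℝ V]
    [CompleteSpace V]
    (hrefl : Function.Surjective ⇑(NormedSpace.inclusionInDoubleDual ℝ V))
    (A : V → StrongDual ℝ V)
    (hmono : ∀ u v : V, 0 ≤ (A u - A v) (u - v))
    (hhemi : ∀ u v w : V, Continuous fun t : ℝ => (A (u + t • v)) w)
    (u : ℕ → V) (u₀ : V)
    (hweak : ∀ ℓ : StrongDual ℝ V,
      Tendsto (fun n => ℓ (u n)) atTop (nhds (ℓ u₀)))
    (f : StrongDual ℝ V)
    (hstrong : Tendsto (fun n => A (u n)) atTop (nhds f))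
    (hlimsup : limsup (fun n => (A (u n)) (u n)) atTop ≤ f u₀) :
    A u₀ = f :=
  minty_trick_general A hmono hhemi u u₀ hweak f hstrong
end
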